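/- Let P, P̃ be d×k real matrices, Q, Q̃ be k×k symmetric positive-semidefinite matrices, and Γ a k×k symmetric positive-definite matrix. Define the gain operator 𝒫(P, Q) = P (Q + Γ)⁻¹. Then ‖𝒫(P, Q) − 𝒫(P̃, Q̃)‖ ≤ ‖Γ⁻¹‖ ‖P − P̃‖ + ‖Γ⁻¹‖² ‖P‖ ‖Q − Q̃‖. -/

import Mathlib

open Matrix

/-- Operator (spectral) norm of a real matrix, via its action on Euclidean space. -/
noncomputable def opNorm {m n : Type*} [Fintype m] [Fintype n] [DecidableEq n]
    (A : Matrix m n ℝ) : ℝ :=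
  ‖LinearMap.toContinuousLinearMap (Matrix.toEuclideanLin A)‖

/-- Maximum absolute entry of a matrix. -/
noncomputable def maxNorm {m n : Type*} [Fintype m] [Fintype n] (A : Matrix m n ℝ) : ℝ :=
  ⨆ ij : m × n, |A ij.1 ij.2|

/-!
Write `B = Q + Γ` and `B̃ = Q̃ + Γ`. The resolvent identity
`P B⁻¹ - P̃ B̃⁻¹ = (P - P̃) B̃⁻¹ + P B⁻¹ (B̃ - B) B̃⁻¹` reduces the claim to
`‖B⁻¹‖, ‖B̃⁻¹‖ ≤ ‖Γ⁻¹‖`. That bound holds because `B` is at least as coercive as `Γ`: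
with `S = √Γ` one has `‖y‖ ≤ ‖S⁻¹‖ ‖S y‖`, i.e. `‖y‖² ≤ ‖Γ⁻¹‖ ⟪Γ y, y⟫ ≤ ‖Γ⁻¹‖ ⟪B y, y⟫`,
and a coercivity constant of an operator bounds the norm of its inverse.
-/

open RCLike ContinuousLinearMap
open scoped InnerProductSpace Matrix.Norms.L2Operator MatrixOrder ComplexOrder

variable {𝕜 : Type*} [RCLike 𝕜]

theorem ContinuousLinearMap.opNorm_le_of_leftInverse_of_coercive {E : Type*}
    [NormedAddCommGroup E] [InnerProductSpace 𝕜 E] {A B : E →L[𝕜] E}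
    (hAB : Function.LeftInverse A B) {C : ℝ} (hC : 0 ≤ C)
    (hA : ∀ y, ‖y‖ ^ 2 ≤ C * re ⟪A y, y⟫_𝕜) : ‖B‖ ≤ C := by
  refine B.opNorm_le_bound hC fun x => ?_
  have key : ‖B x‖ * ‖B x‖ ≤ (C * ‖x‖) * ‖B x‖ :=
    calc ‖B x‖ * ‖B x‖ = ‖B x‖ ^ 2 := (sq _).symm
      _ ≤ C * re ⟪x, B x⟫_𝕜 := by simpa only [hAB x] using hA (B x)
      _ ≤ C * (‖x‖ * ‖B x‖) := mul_le_mul_of_nonneg_left (re_inner_le_norm _ _) hC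
      _ = (C * ‖x‖) * ‖B x‖ := by ring
  rcases (norm_nonneg (B x)).eq_or_lt with h | h
  · rw [← h]; positivity
  · exact le_of_mul_le_mul_right key h

namespace Matrix

theorem mul_inv_sub_mul_inv_eq {m n α : Type*} [Fintype n] [DecidableEq n] [CommRing α]
    (P P' : Matrix m n α) {B B' : Matrix n n α} (hB : IsUnit B) (hB' : IsUnit B') :
    P * B⁻¹ - P' * B'⁻¹ = (P - P') * B'⁻¹ + P * (B⁻¹ * (B' - B) * B'⁻¹) := by
  rw [← inv_sub_inv (iff_of_true hB hB'), Matrix.sub_mul, Matrix.mul_sub]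
  abel

variable {n : Type*} [Fintype n] [DecidableEq n]

local notation "T" => toEuclideanCLM (n := n) (𝕜 := 𝕜)

theorem PosDef.norm_sq_le_norm_inv_mul_re_inner {Γ : Matrix n n 𝕜} (hΓ : Γ.PosDef)
    (x : EuclideanSpace 𝕜 n) : ‖x‖ ^ 2 ≤ ‖Γ⁻¹‖ * re ⟪T Γ x, x⟫_𝕜 := by
  set S := CFC.sqrt Γ
  have hSS : S * S = Γ := CFC.sqrt_mul_sqrt_self Γ hΓ.posSemidef.nonneg
  have hSstar : star S = S := (CFC.sqrt_nonneg Γ).isSelfAdjoint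
  have hS : IsUnit S := (CFC.isUnit_sqrt_iff Γ hΓ.posSemidef.nonneg).2 hΓ.isUnit
  have hnorm : ‖S⁻¹‖ ^ 2 = ‖Γ⁻¹‖ := by
    rw [sq, ← l2_opNorm_conjTranspose_mul_self, conjTranspose_nonsing_inv,
      ← star_eq_conjTranspose, hSstar, ← mul_inv_rev, hSS]
  have hquad : re ⟪T Γ x, x⟫_𝕜 = ‖T S x‖ ^ 2 := by
    rw [← hSS, map_mul, mul_apply_eq_comp, ← adjoint_inner_right, ← star_eq_adjoint,
      ← map_star, hSstar, inner_self_eq_norm_sq]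
  have hx : T S⁻¹ (T S x) = x := by
    rw [← mul_apply_eq_comp, ← map_mul, nonsing_inv_mul S ((isUnit_iff_isUnit_det S).1 hS),
      map_one, one_apply_eq_self]
  calc ‖x‖ ^ 2 ≤ (‖S⁻¹‖ * ‖T S x‖) ^ 2 := by
        gcongr
        conv_lhs => rw [← hx]
        exact (T S⁻¹).le_opNorm _
    _ = ‖Γ⁻¹‖ * re ⟪T Γ x, x⟫_𝕜 := by rw [mul_pow, hnorm, hquad]

theorem norm_inv_add_le_norm_inv {Q Γ : Matrix n n 𝕜} (hQ : Q.PosSemidef) (hΓ : Γ.PosDef) :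
    ‖(Q + Γ)⁻¹‖ ≤ ‖Γ⁻¹‖ := by
  have hdet : IsUnit (Q + Γ).det := (isUnit_iff_isUnit_det _).1 (hΓ.posSemidef_add hQ).isUnit
  rw [← l2_opNorm_toEuclideanCLM]
  refine opNorm_le_of_leftInverse_of_coercive (A := T (Q + Γ)) (fun x => ?_) (norm_nonneg _)
    fun y => ?_
  · rw [← mul_apply_eq_comp, ← map_mul, mul_nonsing_inv _ hdet, map_one, one_apply_eq_self]
  · have hQy : 0 ≤ re ⟪T Q y, y⟫_𝕜 :=
      (isPositive_toEuclideanLin_iff.2 hQ).re_inner_nonneg_left y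
    calc ‖y‖ ^ 2 ≤ ‖Γ⁻¹‖ * re ⟪T Γ y, y⟫_𝕜 := hΓ.norm_sq_le_norm_inv_mul_re_inner y
      _ ≤ ‖Γ⁻¹‖ * re ⟪T (Q + Γ) y, y⟫_𝕜 := by
        refine mul_le_mul_of_nonneg_left ?_ (norm_nonneg _)
        rw [map_add, _root_.add_apply, inner_add_left, map_add]
        linarith

theorem norm_mul_inv_sub_mul_inv_le {m : Type*} [Fintype m] (P P' : Matrix m n 𝕜)
    {B B' : Matrix n n 𝕜} (hB : IsUnit B) (hB' : IsUnit B') {c : ℝ} (hc : ‖B⁻¹‖ ≤ c)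
    (hc' : ‖B'⁻¹‖ ≤ c) :
    ‖P * B⁻¹ - P' * B'⁻¹‖ ≤ c * ‖P - P'‖ + c ^ 2 * ‖P‖ * ‖B - B'‖ := by
  have hc0 : 0 ≤ c := (norm_nonneg _).trans hc
  rw [mul_inv_sub_mul_inv_eq P P' hB hB', ← norm_neg (B - B'), neg_sub]
  calc _ ≤ ‖(P - P') * B'⁻¹‖ + ‖P * (B⁻¹ * (B' - B) * B'⁻¹)‖ := norm_add_le _ _
    _ ≤ ‖P - P'‖ * ‖B'⁻¹‖ + ‖P‖ * (‖B⁻¹‖ * ‖B' - B‖ * ‖B'⁻¹‖) := by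
      gcongr
      · exact l2_opNorm_mul _ _
      · refine (l2_opNorm_mul _ _).trans ?_
        gcongr
        refine (l2_opNorm_mul _ _).trans ?_
        gcongr
        exact l2_opNorm_mul _ _
    _ ≤ ‖P - P'‖ * c + ‖P‖ * (c * ‖B' - B‖ * c) := by gcongr
    _ = c * ‖P - P'‖ + c ^ 2 * ‖P‖ * ‖B' - B‖ := by ring

end Matrix

/-- Continuity of the nonlinear gain-update operator `𝒫(P, Q) = P (Q + Γ)⁻¹`. -/
theorem gain_update_continuity {d k : ℕ}
    (P Ptil : Matrix (Fin d) (Fin k) ℝ)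
    (Q Qtil : Matrix (Fin k) (Fin k) ℝ)
    (Γ : Matrix (Fin k) (Fin k) ℝ)
    (hQ : Q.PosSemidef) (hQtil : Qtil.PosSemidef) (hΓ : Γ.PosDef) :
    opNorm (P * (Q + Γ)⁻¹ - Ptil * (Qtil + Γ)⁻¹)
      ≤ opNorm Γ⁻¹ * opNorm (P - Ptil) + opNorm Γ⁻¹ ^ 2 * opNorm P * opNorm (Q - Qtil) := by
  have h := norm_mul_inv_sub_mul_inv_le P Ptil (hΓ.posSemidef_add hQ).isUnit
    (hΓ.posSemidef_add hQtil).isUnit (norm_inv_add_le_norm_inv hQ hΓ)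
    (norm_inv_add_le_norm_inv hQtil hΓ)
  rwa [add_sub_add_right_eq_sub] at h
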